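/- arXiv:2212.07630 — 2 statements merged into one kernel-verified Lean document; each statement's English description precedes it below -/
import Mathlib

section
/- For a monic real cubic λ³ + a λ² + b λ + c, define the Hopf function h(a,b,c) = c - a·b. If b > 0, then the cubic has a root with zero real part and nonzero imaginary part exactly when h(a,b,c) = 0; moreover, for a one-parameter smooth family of coefficients (a(ε), b(ε), c(ε)) with b(0) > 0 and h(a(0),b(0),c(0)) = 0, the complex conjugate pair of roots λ(ε) = μ(ε) ± iω(ε) satisfies μ(0) = 0 and ω(0) = √(b(0)). -/
open Complex in
/-- For the monic cubic `λ³ + aλ² + bλ + c` with `b > 0`, the Hopf function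
`h = c - a·b` vanishes exactly when the cubic has a root with zero real part
and nonzero imaginary part; moreover along a smooth family of coefficients at a
Hopf point, the continued complex pair `μ(ε) ± iω(ε)` satisfies `μ(0) = 0` and
`ω(0) = √(b 0)`. -/
theorem stmt9 :
    (∀ a b c : ℝ, 0 < b →
      ((∃ z : ℂ, z.re = 0 ∧ z.im ≠ 0 ∧
          z ^ 3 + (a : ℂ) * z ^ 2 + (b : ℂ) * z + (c : ℂ) = 0)
        ↔ c - a * b = 0)) ∧
    (∀ a b c μ ω : ℝ → ℝ,
      ContDiff ℝ (⊤ : ℕ∞) a → ContDiff ℝ (⊤ : ℕ∞) b → ContDiff ℝ (⊤ : ℕ∞) c →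
      ContDiff ℝ (⊤ : ℕ∞) μ → ContDiff ℝ (⊤ : ℕ∞) ω →
      0 < b 0 → c 0 - a 0 * b 0 = 0 → 0 < ω 0 →
      (∀ ε : ℝ,
        ((μ ε : ℂ) + I * (ω ε)) ^ 3 + (a ε : ℂ) * ((μ ε : ℂ) + I * (ω ε)) ^ 2 +
          (b ε : ℂ) * ((μ ε : ℂ) + I * (ω ε)) + (c ε : ℂ) = 0) →
      μ 0 = 0 ∧ ω 0 = Real.sqrt (b 0)) := by
  constructor
  · intro a b c hb
    constructor
    · rintro ⟨z, hre, him, hz⟩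
      rw [Complex.ext_iff] at hz
      simp [Complex.add_re, Complex.add_im, Complex.mul_re, Complex.mul_im,
        pow_succ, hre] at hz
      obtain ⟨h1, h2⟩ := hz
      have hy2 : z.im ^ 2 = b := by
        rcases mul_eq_zero.mp (show z.im * (b - z.im ^ 2) = 0 by nlinarith) with h | h
        · exact absurd h him
        · nlinarith
      linear_combination h1 + a * hy2
    · intro h
      refine ⟨Complex.I * Real.sqrt b, by simp, by simp [Real.sqrt_ne_zero'.mpr hb], ?_⟩
      have hs : (Real.sqrt b : ℂ) ^ 2 = (b : ℂ) := by
        norm_cast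
        exact Real.sq_sqrt hb.le
      have hc : c = a * b := by linarith
      have key : (Complex.I * (Real.sqrt b : ℂ)) ^ 2 = -(b : ℂ) := by
        rw [mul_pow, Complex.I_sq, hs]; ring
      rw [hc, show (Complex.I * (Real.sqrt b : ℂ)) ^ 3
          = (Complex.I * (Real.sqrt b : ℂ)) ^ 2 * (Complex.I * (Real.sqrt b : ℂ)) by ring, key]
      push_cast
      ring
  · intro a b c μ ω _ _ _ _ _ hb0 hhopf hw0 heq
    have h0 := heq 0
    rw [Complex.ext_iff] at h0
    simp [Complex.add_re, Complex.add_im, Complex.mul_re, Complex.mul_im, pow_succ] at h0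
    obtain ⟨h1, h2⟩ := h0
    set m := μ 0 with hm
    set w := ω 0 with hw
    have hw2 : w ^ 2 = 3 * m ^ 2 + 2 * a 0 * m + b 0 := by
      have : w * (3 * m ^ 2 + 2 * a 0 * m + b 0 - w ^ 2) = 0 := by nlinarith
      rcases mul_eq_zero.mp this with h | h
      · exact absurd h (ne_of_gt hw0)
      · linarith
    have hmz : m = 0 := by
      have key : m * ((2 * m + a 0) ^ 2 + b 0) = 0 := by
        linear_combination (-(1:ℝ)/2) * h1 + (1/2) * hhopf + (-(3*m + a 0)/2) * hw2
      rcases mul_eq_zero.mp key with h | h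
      · exact h
      · nlinarith [sq_nonneg (2 * m + a 0)]
    refine ⟨hmz, ?_⟩
    have : w ^ 2 = b 0 := by rw [hw2, hmz]; ring
    rw [← this, Real.sqrt_sq hw0.le]
end

section
/- Let J be a real 3×3 matrix with trace T, sum of principal 2×2 minors M, and determinant D. Then J has eigenvalues ±iω (ω > 0) and a nonzero real eigenvalue if and only if M > 0, T ≠ 0, and D = T·M; in that case the real eigenvalue equals T and ω = √M. -/
open Complex in
private lemma stmt17_aux (J : Matrix (Fin 3) (Fin 3) ℝ) (T M D : ℝ)
    (hT : T = J.trace)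
    (hM : M = (J 0 0 * J 1 1 - J 0 1 * J 1 0) + (J 0 0 * J 2 2 - J 0 2 * J 2 0) +
      (J 1 1 * J 2 2 - J 1 2 * J 2 1))
    (hD : D = J.det) (z : ℂ) :
    z ∈ spectrum ℂ (J.map (algebraMap ℝ ℂ)) ↔ z^3 - T*z^2 + M*z - D = 0 := by
  rw [spectrum.mem_iff, Matrix.isUnit_iff_isUnit_det, isUnit_iff_ne_zero, not_ne_iff]
  subst hT hM hD
  rw [Matrix.det_fin_three, Matrix.det_fin_three, Matrix.trace_fin_three]
  simp [Matrix.sub_apply, Matrix.smul_apply, Matrix.one_apply, Matrix.map_apply,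
    Matrix.algebraMap_matrix_apply]
  constructor <;> intro h <;> linear_combination h

open Complex in
private lemma stmt17_aux2 (J : Matrix (Fin 3) (Fin 3) ℝ) (T M D : ℝ)
    (hT : T = J.trace)
    (hM : M = (J 0 0 * J 1 1 - J 0 1 * J 1 0) + (J 0 0 * J 2 2 - J 0 2 * J 2 0) +
      (J 1 1 * J 2 2 - J 1 2 * J 2 1))
    (hD : D = J.det) (ω ρ : ℝ) (hω : 0 < ω) (hρ : ρ ≠ 0)
    (h1 : (I * ω) ∈ spectrum ℂ (J.map (algebraMap ℝ ℂ)))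
    (h3 : (ρ : ℂ) ∈ spectrum ℂ (J.map (algebraMap ℝ ℂ))) :
    M = ω^2 ∧ D = T * M ∧ ρ = T := by
  rw [stmt17_aux J T M D hT hM hD] at h1 h3
  have e1 : ((T*ω^2 - D : ℝ) : ℂ) + ((M*ω - ω^3 : ℝ):ℂ)*I = 0 := by
    push_cast
    linear_combination h1 + ((T:ℂ)*ω^2 - (ω:ℂ)^3*I)*Complex.I_sq
  simp only [Complex.ext_iff, Complex.add_re, Complex.add_im, Complex.mul_re,
    Complex.mul_im, Complex.I_re, Complex.I_im, Complex.ofReal_re, Complex.ofReal_im,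
    Complex.zero_re, Complex.zero_im, mul_zero, mul_one, zero_mul, sub_zero,
    add_zero, zero_add] at e1
  obtain ⟨eRe, eIm⟩ := e1
  have hM2 : M = ω^2 := by
    have : ω * (M - ω^2) = 0 := by linarith [eIm]
    rcases mul_eq_zero.1 this with h | h
    · exact absurd h hω.ne'
    · linarith
  have hDTM : D = T * M := by rw [hM2]; linarith [eRe]
  refine ⟨hM2, hDTM, ?_⟩
  have e3 : ((ρ^3 - T*ρ^2 + M*ρ - D : ℝ) : ℂ) = 0 := by push_cast; linear_combination h3
  have e3' : ρ^3 - T*ρ^2 + M*ρ - D = 0 := by exact_mod_cast e3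
  have hfac : (ρ - T) * (ρ^2 + M) = 0 := by rw [hDTM] at e3'; linear_combination e3'
  rcases mul_eq_zero.1 hfac with h | h
  · linarith
  · nlinarith [hω, hM2]

open Complex in
/-- A real 3×3 matrix with trace `T`, sum of principal 2×2 minors `M` and
determinant `D` has eigenvalues `±iω` (`ω > 0`) and a nonzero real eigenvalue
iff `M > 0`, `T ≠ 0` and `D = T·M`; in that case the real eigenvalue is `T`
and `ω = √M`. -/
theorem stmt17 (J : Matrix (Fin 3) (Fin 3) ℝ) (T M D : ℝ)
    (hT : T = J.trace)
    (hM : M = (J 0 0 * J 1 1 - J 0 1 * J 1 0) + (J 0 0 * J 2 2 - J 0 2 * J 2 0) +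
      (J 1 1 * J 2 2 - J 1 2 * J 2 1))
    (hD : D = J.det) :
    ((∃ ω ρ : ℝ, 0 < ω ∧ ρ ≠ 0 ∧
        (I * ω) ∈ spectrum ℂ (J.map (algebraMap ℝ ℂ)) ∧
        (-(I * ω)) ∈ spectrum ℂ (J.map (algebraMap ℝ ℂ)) ∧
        (ρ : ℂ) ∈ spectrum ℂ (J.map (algebraMap ℝ ℂ)))
      ↔ (0 < M ∧ T ≠ 0 ∧ D = T * M)) ∧
    (∀ ω ρ : ℝ, 0 < ω → ρ ≠ 0 →
      (I * ω) ∈ spectrum ℂ (J.map (algebraMap ℝ ℂ)) →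
      (-(I * ω)) ∈ spectrum ℂ (J.map (algebraMap ℝ ℂ)) →
      (ρ : ℂ) ∈ spectrum ℂ (J.map (algebraMap ℝ ℂ)) →
      ρ = T ∧ ω = Real.sqrt M) := by
  have key := stmt17_aux J T M D hT hM hD
  constructor
  · constructor
    · rintro ⟨ω, ρ, hω, hρ, h1, h2, h3⟩
      obtain ⟨hM2, hDTM, hρT⟩ := stmt17_aux2 J T M D hT hM hD ω ρ hω hρ h1 h3
      exact ⟨hM2 ▸ pow_pos hω 2, hρT ▸ hρ, hDTM⟩
    · rintro ⟨hMpos, hTne, hDTM⟩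
      refine ⟨Real.sqrt M, T, Real.sqrt_pos.2 hMpos, hTne, ?_, ?_, ?_⟩ <;> rw [key]
      · have hs : ((Real.sqrt M : ℝ) : ℂ)^2 = (M : ℂ) := by
          norm_cast; exact Real.sq_sqrt hMpos.le
        rw [hDTM]; push_cast
        linear_combination (I^3*((Real.sqrt M : ℝ):ℂ) - (T:ℂ)*I^2) * hs +
          ((M:ℂ)*(I*((Real.sqrt M : ℝ):ℂ) - T)) * Complex.I_sq
      · have hs : ((Real.sqrt M : ℝ) : ℂ)^2 = (M : ℂ) := by
          norm_cast; exact Real.sq_sqrt hMpos.le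
        rw [hDTM]; push_cast
        linear_combination (-I^3*((Real.sqrt M : ℝ):ℂ) - (T:ℂ)*I^2) * hs +
          ((M:ℂ)*(-I*((Real.sqrt M : ℝ):ℂ) - T)) * Complex.I_sq
      · rw [hDTM]; push_cast; ring
  · intro ω ρ hω hρ h1 h2 h3
    obtain ⟨hM2, hDTM, hρT⟩ := stmt17_aux2 J T M D hT hM hD ω ρ hω hρ h1 h3
    exact ⟨hρT, by rw [hM2, Real.sqrt_sq hω.le]⟩
end
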